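/- Let φ be a nilpotent R-endomorphism of a finitely generated semisimple left R-module M with Jordan normal base indexed by finite Γ with block sizes k_γ, and let Φ be the associated surjection. For every ψ ∈ Hom_R(M,M) with ψ∘φ = φ∘ψ there exists a matrix P ∈ M(Φ) whose (δ,γ) entry has degree ≤ k_γ − 1, such that ψ(Φ(f)) = Φ(fP) for all f ∈ (R[t])^Γ. -/

import Mathlib

open Polynomial

/-- A nilpotent Jordan normal base of the left `R`-module `M` with respect to the
endomorphism `φ`: a family `x γ i` (`γ ∈ Γ`, `0 ≤ i < k γ`, 0-based indexing) such that
each `R • x γ i` is a simple submodule, `M` is the internal direct sum of these submodules,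
`φ` shifts within each block (annihilating the last element, i.e. `x γ i = 0` for `i ≥ k γ`),
and the block sizes `k γ` are bounded. -/
structure IsNilpotentJordanBase {R : Type*} [Ring R] {M : Type*} [AddCommGroup M] [Module R M]
    (φ : Module.End R M) {Γ : Type*} (k : Γ → ℕ) (x : Γ → ℕ → M) : Prop where
  k_pos : ∀ γ, 1 ≤ k γ
  simple : ∀ γ, ∀ i < k γ, IsSimpleModule R ↥(Submodule.span R {x γ i})
  indep : iSupIndep fun p : Σ γ : Γ, Fin (k γ) => Submodule.span R {x p.1 p.2.val}
  spans : (⨆ p : Σ γ : Γ, Fin (k γ), Submodule.span R {x p.1 p.2.val}) = ⊤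
  step : ∀ γ i, φ (x γ i) = x γ (i + 1)
  zero_after : ∀ γ i, k γ ≤ i → x γ i = 0
  bounded : ∃ n, ∀ γ, k γ ≤ n

/-- The action of a polynomial `f = a₁ + a₂ t + ⋯ + a_{n+1} tⁿ ∈ R[t]` on `u ∈ M` induced by
the endomorphism `φ`: `f ∗ u = a₁ u + a₂ φ(u) + ⋯ + a_{n+1} φⁿ(u)`. -/
noncomputable def polyAction {R : Type*} [Ring R] {M : Type*} [AddCommGroup M] [Module R M]
    (φ : Module.End R M) (f : Polynomial R) (u : M) : M :=
  f.sum fun i a => a • (φ ^ i) u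

/-- The map `Φ : (R[t])^Γ → M`, `Φ((f_γ)_γ) = Σ_γ f_γ(t) ∗ x_{γ,1}`, associated to a
nilpotent Jordan normal base `x` with finite block set `Γ`. -/
noncomputable def jordanPhiF {R : Type*} [Ring R] {M : Type*} [AddCommGroup M] [Module R M]
    (φ : Module.End R M) {Γ : Type*} [Fintype Γ] (x : Γ → ℕ → M) (f : Γ → Polynomial R) : M :=
  ∑ γ, polyAction φ (f γ) (x γ 0)

/-!
Every element of `M` is an `R`-combination of the `x γ i = φⁱ (x γ 0)`, so `ψ (x δ 0) = Φ (P δ)`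
for a row `P δ` of polynomials with `deg (P δ γ) < k γ`. Since `ψ` commutes with `φ`, it commutes
with the `R[t]`-action, and `Φ` is `R[t]`-linear, whence `ψ (Φ f) = Σ_δ f δ ∗ Φ (P δ) = Φ (f P)`.
-/

section PolyAction

variable {R : Type*} [Ring R] {M : Type*} [AddCommGroup M] [Module R M] (φ : Module.End R M)

lemma polyAction_monomial (n : ℕ) (a : R) (u : M) :
    polyAction φ (monomial n a) u = a • (φ ^ n) u := by
  rw [polyAction, sum_monomial_index]
  exact zero_smul R _

lemma polyAction_add_left (f g : R[X]) (u : M) :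
    polyAction φ (f + g) u = polyAction φ f u + polyAction φ g u :=
  sum_add_index _ _ _ (fun _ => zero_smul R _) fun _ _ _ => add_smul _ _ _

lemma polyAction_sum_left {ι : Type*} (s : Finset ι) (g : ι → R[X]) (u : M) :
    polyAction φ (∑ i ∈ s, g i) u = ∑ i ∈ s, polyAction φ (g i) u :=
  map_sum (AddMonoidHom.mk' (polyAction φ · u) fun f g => polyAction_add_left φ f g u) g s

lemma polyAction_add_right (f : R[X]) (u v : M) :
    polyAction φ f (u + v) = polyAction φ f u + polyAction φ f v := by
  simp only [polyAction, Polynomial.sum, map_add, smul_add, Finset.sum_add_distrib]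

lemma polyAction_sum_right {ι : Type*} (s : Finset ι) (f : R[X]) (u : ι → M) :
    polyAction φ f (∑ i ∈ s, u i) = ∑ i ∈ s, polyAction φ f (u i) :=
  map_sum (AddMonoidHom.mk' (polyAction φ f) (polyAction_add_right φ f)) u s

lemma polyAction_mul (f g : R[X]) (u : M) :
    polyAction φ (f * g) u = polyAction φ f (polyAction φ g u) := by
  induction f using Polynomial.induction_on' with
  | add p q hp hq => rw [add_mul, polyAction_add_left, polyAction_add_left, hp, hq]
  | monomial n a =>
    induction g using Polynomial.induction_on' with
    | add p q hp hq =>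
      rw [mul_add, polyAction_add_left, polyAction_add_left, polyAction_add_right, hp, hq]
    | monomial m b =>
      rw [monomial_mul_monomial, polyAction_monomial, polyAction_monomial,
        polyAction_monomial, pow_add, Module.End.mul_apply, map_smul, smul_smul]

lemma polyAction_map_of_commute {ψ : Module.End R M} (hψ : Commute ψ φ) (f : R[X]) (u : M) :
    ψ (polyAction φ f u) = polyAction φ f (ψ u) := by
  simp only [polyAction, Polynomial.sum, map_sum, map_smul, ← Module.End.mul_apply,
    (hψ.pow_right _).eq]

end PolyAction

section JordanPhi

variable {R : Type*} [Ring R] {M : Type*} [AddCommGroup M] [Module R M] (φ : Module.End R M)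
  {Γ : Type*} [Fintype Γ] (x : Γ → ℕ → M)

lemma jordanPhiF_vecMul (f : Γ → R[X]) (P : Matrix Γ Γ R[X]) :
    jordanPhiF φ x (Matrix.vecMul f P) = ∑ δ, polyAction φ (f δ) (jordanPhiF φ x (P δ)) := by
  simp only [jordanPhiF, Matrix.vecMul, dotProduct, polyAction_sum_left, polyAction_sum_right,
    polyAction_mul]
  exact Finset.sum_comm

lemma map_jordanPhiF_of_commute {ψ : Module.End R M} (hψ : Commute ψ φ) (f : Γ → R[X]) :
    ψ (jordanPhiF φ x f) = ∑ δ, polyAction φ (f δ) (ψ (x δ 0)) := by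
  simp only [jordanPhiF, map_sum, polyAction_map_of_commute φ hψ]

end JordanPhi

namespace IsNilpotentJordanBase

variable {R : Type*} [Ring R] {M : Type*} [AddCommGroup M] [Module R M] {φ : Module.End R M}
  {Γ : Type*} {k : Γ → ℕ} {x : Γ → ℕ → M}

lemma pow_apply (h : IsNilpotentJordanBase φ k x) (γ : Γ) (i : ℕ) :
    (φ ^ i) (x γ 0) = x γ i := by
  induction i with
  | zero => rfl
  | succ n ih => rw [pow_succ', Module.End.mul_apply, ih, h.step]

lemma exists_sum_smul_eq [Fintype Γ] (h : IsNilpotentJordanBase φ k x) (u : M) :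
    ∃ c : (Σ γ, Fin (k γ)) → R, ∑ p, c p • x p.1 p.2 = u := by
  have hspan : Submodule.span R (Set.range fun p : Σ γ, Fin (k γ) => x p.1 p.2) = ⊤ := by
    rw [Submodule.span_range_eq_iSup]
    exact h.spans
  exact (Submodule.mem_span_range_iff_exists_fun R).mp (hspan ▸ Submodule.mem_top)

lemma exists_jordanPhiF_eq [Fintype Γ] (h : IsNilpotentJordanBase φ k x) (u : M) :
    ∃ g : Γ → R[X], (∀ γ, (g γ).degree < k γ) ∧ jordanPhiF φ x g = u := by
  obtain ⟨c, hc⟩ := h.exists_sum_smul_eq u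
  refine ⟨fun γ => ∑ i : Fin (k γ), C (c ⟨γ, i⟩) * X ^ (i : ℕ),
    fun γ => degree_sum_fin_lt _, ?_⟩
  rw [← hc, ← Finset.univ_sigma_univ, Finset.sum_sigma, jordanPhiF]
  refine Finset.sum_congr rfl fun γ _ => ?_
  simp only [polyAction_sum_left, C_mul_X_pow_eq_monomial, polyAction_monomial, h.pow_apply]

end IsNilpotentJordanBase

theorem stmt_12_general {R : Type*} [Ring R] {M : Type*} [AddCommGroup M] [Module R M]
    (φ : Module.End R M) {Γ : Type*} [Fintype Γ] (k : Γ → ℕ) (x : Γ → ℕ → M)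
    (h : IsNilpotentJordanBase φ k x)
    (ψ : Module.End R M) (hψ : ψ * φ = φ * ψ) :
    ∃ P : Matrix Γ Γ (Polynomial R),
      (∀ δ γ, (P δ γ).degree < (k γ : ℕ)) ∧
      (∀ f : Γ → Polynomial R, jordanPhiF φ x f = 0 → jordanPhiF φ x (Matrix.vecMul f P) = 0) ∧
      (∀ f : Γ → Polynomial R, ψ (jordanPhiF φ x f) = jordanPhiF φ x (Matrix.vecMul f P)) := by
  choose P hdeg hP using fun δ => h.exists_jordanPhiF_eq (ψ (x δ 0))
  have hψP : ∀ f, ψ (jordanPhiF φ x f) = jordanPhiF φ x (Matrix.vecMul f (.of P)) := fun f => by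
    rw [map_jordanPhiF_of_commute φ x hψ, jordanPhiF_vecMul]
    exact Finset.sum_congr rfl fun δ _ => congrArg _ (hP δ).symm
  refine ⟨.of P, hdeg, fun f hf => ?_, hψP⟩
  rw [← hψP, hf, map_zero]

/-- For every `ψ` commuting with `φ` there is a matrix `P ∈ M(Φ)` whose `(δ,γ)` entry has
degree `≤ k γ - 1` such that `ψ(Φ(f)) = Φ(fP)` for all `f ∈ (R[t])^Γ`. -/
theorem stmt_12 {R : Type*} [Ring R] {M : Type*} [AddCommGroup M] [Module R M]
    [Module.Finite R M] [IsSemisimpleModule R M]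
    (φ : Module.End R M) {Γ : Type*} [Fintype Γ] [DecidableEq Γ] (k : Γ → ℕ) (x : Γ → ℕ → M)
    (h : IsNilpotentJordanBase φ k x)
    (ψ : Module.End R M) (hψ : ψ * φ = φ * ψ) :
    ∃ P : Matrix Γ Γ (Polynomial R),
      (∀ δ γ, (P δ γ).degree < (k γ : ℕ)) ∧
      (∀ f : Γ → Polynomial R, jordanPhiF φ x f = 0 → jordanPhiF φ x (Matrix.vecMul f P) = 0) ∧
      (∀ f : Γ → Polynomial R, ψ (jordanPhiF φ x f) = jordanPhiF φ x (Matrix.vecMul f P)) :=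
  stmt_12_general φ k x h ψ hψ
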